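/- arXiv:0806.2486 — 3 statements merged into one kernel-verified Lean document; each statement's English description precedes it below -/
import Mathlib

section
/- If n = j(j+1)/2 + k(k+1)/2 is a sum of two triangular numbers and m = 2t+1 is odd, then m²·n + (m²-1)/4 = (m²·j(j+1)/2 + (m²-1)/8) + (m²·k(k+1)/2 + (m²-1)/8), and both summands are triangular numbers. -/
/-- A natural number is triangular if it is of the form k(k+1)/2. -/
def IsTriangular (n : ℕ) : Prop := ∃ k : ℕ, n = k * (k + 1) / 2

lemma key (t a : ℕ) :
    (2*t+1)^2 * (a*(a+1)/2) + ((2*t+1)^2-1)/8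
      = ((2*t+1)*a+t)*((2*t+1)*a+t+1)/2 := by
  obtain ⟨c, hc⟩ := Nat.even_mul_succ_self a
  obtain ⟨d, hd⟩ := Nat.even_mul_succ_self t
  have he : (2*t+1)^2 = 4*(t*(t+1)) + 1 := by ring
  have he' : (2*t+1)^2 = 8*d + 1 := by omega
  have h1 : a*(a+1)/2 = c := by omega
  have h2 : ((2*t+1)^2-1)/8 = d := by omega
  have hx : ((2*t+1)*a+t)*((2*t+1)*a+t+1)
      = (2*t+1)^2*(a*(a+1)) + t*(t+1) := by ring
  have hx' : ((2*t+1)*a+t)*((2*t+1)*a+t+1) = 2*((8*d+1)*c + d) := by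
    rw [hx, hc, hd, he']; ring
  rw [h1, h2, he', hx', Nat.mul_div_cancel_left _ (by norm_num)]

theorem stmt2 (j k t n : ℕ) (hn : n = j * (j + 1) / 2 + k * (k + 1) / 2) :
    (2 * t + 1) ^ 2 * n + ((2 * t + 1) ^ 2 - 1) / 4 =
      ((2 * t + 1) ^ 2 * (j * (j + 1) / 2) + ((2 * t + 1) ^ 2 - 1) / 8) +
      ((2 * t + 1) ^ 2 * (k * (k + 1) / 2) + ((2 * t + 1) ^ 2 - 1) / 8) ∧
    IsTriangular ((2 * t + 1) ^ 2 * (j * (j + 1) / 2) + ((2 * t + 1) ^ 2 - 1) / 8) ∧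
    IsTriangular ((2 * t + 1) ^ 2 * (k * (k + 1) / 2) + ((2 * t + 1) ^ 2 - 1) / 8) := by
  refine ⟨?_, ⟨(2*t+1)*j+t, key t j⟩, ⟨(2*t+1)*k+t, key t k⟩⟩
  subst hn
  have he : (2*t+1)^2 = 4*(t*(t+1)) + 1 := by ring
  have := Nat.even_mul_succ_self t
  obtain ⟨d, hd⟩ := this
  have h4 : ((2*t+1)^2-1)/4 = 2*d := by omega
  have h8 : ((2*t+1)^2-1)/8 = d := by omega
  rw [h4, h8, Nat.mul_add]
  ring
end

section
/- For all integers i, j ≥ 1, with r(j,i) = 97 + 57(j-1) + 15·p(j-2) + 9·p(i-2) + 21(i-1), where p(k) = k(k+1)/2 for k ≥ 1 and p(0) = p(-1) = 0, the identity 24(r(j,i) - 2·P5(i+1)) + 3 = (6i+5)² + (6j+11)² + (12j+29)² holds, where P5(k) = (3k²-k)/2 is the k-th pentagonal number. -/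
/-- The k-th triangular number, with p(k)=0 for k ≤ 0. -/
def triZ (k : ℤ) : ℤ := if k ≤ 0 then 0 else k * (k + 1) / 2

/-- The k-th pentagonal number. -/
def pent (k : ℤ) : ℤ := (3 * k ^ 2 - k) / 2

lemma triZ_eq (k : ℤ) (hk : 1 ≤ k) : 2 * triZ (k - 2) = (k - 2) * (k - 1) := by
  unfold triZ
  rcases le_or_gt (k - 2) 0 with h | h
  · simp [h]; omega
  · simp only [if_neg (not_le.mpr h)]
    obtain ⟨c, hc⟩ := Int.even_mul_succ_self (k - 2)
    rw [show k - 2 + 1 = k - 1 from by ring] at hc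
    rw [show k - 2 + 1 = k - 1 from by ring, hc]
    omega

lemma pent_eq (k : ℤ) : 2 * pent k = 3 * k ^ 2 - k := by
  unfold pent
  obtain ⟨c, hc⟩ : Even (3 * k ^ 2 - k) := by
    rcases Int.even_or_odd k with ⟨c, hc⟩ | ⟨c, hc⟩
    · exact ⟨3 * c * k - c, by subst hc; ring⟩
    · exact ⟨k * (3 * c + 1), by subst hc; ring⟩
  rw [hc]; omega

theorem stmt4 (i j : ℤ) (hi : 1 ≤ i) (hj : 1 ≤ j) :
    24 * ((97 + 57 * (j - 1) + 15 * triZ (j - 2) + 9 * triZ (i - 2) + 21 * (i - 1))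
        - 2 * pent (i + 1)) + 3 =
      (6 * i + 5) ^ 2 + (6 * j + 11) ^ 2 + (12 * j + 29) ^ 2 := by
  have h1 := triZ_eq j hj
  have h2 := triZ_eq i hi
  have h3 := pent_eq (i + 1)
  nlinarith [h1, h2, h3]
end

section
/- For all integers i, j ≥ 1, with s(j,i) = 130 + 75(j-1) + 20·p(j-2) + 16·p(i-2) + 36(i-1), where p(k) = k(k+1)/2 for k ≥ 1 and p(0) = p(-1) = 0, the identity 8(s(j,i) - 3·P6(i+1)) + 3 = (4i+3)² + (4j+7)² + (8j+19)² holds, where P6(k) = 2k² - k is the k-th hexagonal number. -/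
/-- The k-th hexagonal number. -/
def hexag (k : ℤ) : ℤ := 2 * k ^ 2 - k

lemma triZ_two_mul (k : ℤ) (hk : -1 ≤ k) : 2 * triZ k = k * (k + 1) := by
  unfold triZ
  split
  · have : k = -1 ∨ k = 0 := by omega
    rcases this with h | h <;> simp [h]
  · rw [Int.mul_ediv_cancel']
    exact Int.even_mul_succ_self k |>.two_dvd

theorem stmt5 (i j : ℤ) (hi : 1 ≤ i) (hj : 1 ≤ j) :
    8 * ((130 + 75 * (j - 1) + 20 * triZ (j - 2) + 16 * triZ (i - 2) + 36 * (i - 1))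
        - 3 * hexag (i + 1)) + 3 =
      (4 * i + 3) ^ 2 + (4 * j + 7) ^ 2 + (8 * j + 19) ^ 2 := by
  have h1 := triZ_two_mul (i - 2) (by omega)
  have h2 := triZ_two_mul (j - 2) (by omega)
  unfold hexag
  linear_combination 64 * h1 + 80 * h2
end
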